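/- Fix β̂, κ ∈ (0,1) and define ζ : ℝ → ℝ by ζ(x) = (x-1)/(2x-1) for x ≤ 0, ζ(x) = 1 + (log 2 / log(n+1)) x^{β̂} for (n+1)^{-1/(1-κ)} ≤ x < n^{-1/(1-κ)} with n ∈ ℕ, and ζ(x) = (3x+1)/(x+1) for x ≥ 1. Then ζ is strictly increasing and satisfies 1/2 < ζ(x) < 3 for all x ∈ ℝ. -/

import Mathlib

/-!
Each of the three pieces is strictly increasing, and their ranges are stacked:
`ζ ∈ (1/2, 1]` on `(-∞, 0]`, `ζ ∈ (1, 2)` on `(0, 1)` and `ζ ∈ [2, 3)` on `[1, ∞)`.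
On `(0, 1)` the blocks `[(n+1)^{-p}, n^{-p})`, `p = 1/(1-κ)`, cover the interval and move
left as `n` grows, so a larger argument lies in a block with smaller `n`, whose coefficient
`log 2 / log (n+1) ∈ (0, 1]` is larger.
-/

open Real Set

theorem StrictMonoOn.union_of_forall_lt {α β : Type*} [LinearOrder α] [Preorder β]
    {f : α → β} {s t : Set α} (hs : StrictMonoOn f s) (ht : StrictMonoOn f t)
    (hst : ∀ a ∈ s, ∀ b ∈ t, a < b) (hf : ∀ a ∈ s, ∀ b ∈ t, f a < f b) :
    StrictMonoOn f (s ∪ t) := by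
  rintro x (hx | hx) y (hy | hy) hxy
  · exact hs hx hy hxy
  · exact hf x hx y hy
  · exact absurd hxy (hst y hy x hx).not_gt
  · exact ht hx hy hxy

theorem strictMonoOn_sub_one_div_two_mul_sub_one :
    StrictMonoOn (fun x : ℝ => (x - 1) / (2 * x - 1)) (Iio (1 / 2)) := by
  intro x hx y hy hxy
  simp only [mem_Iio] at hx hy
  show (x - 1) / (2 * x - 1) < (y - 1) / (2 * y - 1)
  rw [← neg_div_neg_eq (x - 1), ← neg_div_neg_eq (y - 1),
    div_lt_div_iff₀ (by linarith) (by linarith)]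
  nlinarith

theorem mapsTo_sub_one_div_two_mul_sub_one :
    MapsTo (fun x : ℝ => (x - 1) / (2 * x - 1)) (Iic 0) (Ioc (1 / 2) 1) := by
  intro x hx
  simp only [mem_Iic] at hx
  have h : 2 * x - 1 < 0 := by linarith
  constructor
  · rw [lt_div_iff_of_neg h]; linarith
  · rw [div_le_iff_of_neg h]; linarith

theorem strictMonoOn_three_mul_add_one_div_add_one :
    StrictMonoOn (fun x : ℝ => (3 * x + 1) / (x + 1)) (Ioi (-1)) := by
  intro x hx y hy hxy
  simp only [mem_Ioi] at hx hy
  rw [div_lt_div_iff₀ (by linarith) (by linarith)]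
  linarith

theorem mapsTo_three_mul_add_one_div_add_one :
    MapsTo (fun x : ℝ => (3 * x + 1) / (x + 1)) (Ici 1) (Ico 2 3) := by
  intro x hx
  simp only [mem_Ici] at hx
  have h : 0 < x + 1 := by linarith
  constructor
  · rw [le_div_iff₀ h]; linarith
  · rw [div_lt_iff₀ h]; linarith

theorem exists_add_one_rpow_neg_le_and_lt_rpow_neg {p x : ℝ} (hp : 0 < p) (hx0 : 0 < x)
    (hx1 : x < 1) : ∃ n : ℕ, 1 ≤ n ∧ ((n : ℝ) + 1) ^ (-p) ≤ x ∧ x < (n : ℝ) ^ (-p) := by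
  set r := x ^ (-p⁻¹)
  have hr : r ^ (-p) = x := by
    rw [← rpow_mul hx0.le, neg_mul_neg, inv_mul_cancel₀ hp.ne', rpow_one]
  have hr1 : 1 < r := one_lt_rpow_of_pos_of_lt_one_of_neg hx0 hx1 (by simpa using hp)
  have hceil : 1 < ⌈r⌉₊ := Nat.lt_ceil.2 (by exact_mod_cast hr1)
  obtain ⟨n, hn⟩ : ∃ n, ⌈r⌉₊ = n + 1 := Nat.exists_eq_add_one.2 (by omega)
  have hle : r ≤ (n : ℝ) + 1 := by exact_mod_cast hn ▸ Nat.le_ceil r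
  have hlt : (n : ℝ) < r := Nat.lt_ceil.1 (by omega)
  have hn1 : 1 ≤ n := by omega
  refine ⟨n, hn1, hr ▸ rpow_le_rpow_of_nonpos (by linarith) hle (by linarith), ?_⟩
  exact hr ▸ rpow_lt_rpow_of_neg (by exact_mod_cast hn1) hlt (by linarith)

theorem le_of_add_one_rpow_neg_le_of_lt_rpow_neg {p x y : ℝ} {m n : ℕ} (hp : 0 ≤ p)
    (hx : ((n : ℝ) + 1) ^ (-p) ≤ x) (hy : y < (m : ℝ) ^ (-p)) (hxy : x < y) : m ≤ n := by
  by_contra! h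
  have hnm : (n : ℝ) + 1 ≤ m := by exact_mod_cast h
  linarith [rpow_le_rpow_of_nonpos (by positivity) hnm (neg_nonpos.2 hp)]

theorem log_two_div_log_add_one_pos {n : ℕ} (hn : 1 ≤ n) : 0 < log 2 / log ((n : ℝ) + 1) := by
  have : (1 : ℝ) ≤ n := by exact_mod_cast hn
  exact div_pos (log_pos one_lt_two) (log_pos (by linarith))

theorem log_two_div_log_add_one_le_one {n : ℕ} (hn : 1 ≤ n) :
    log 2 / log ((n : ℝ) + 1) ≤ 1 := by
  have : (1 : ℝ) ≤ n := by exact_mod_cast hn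
  rw [div_le_one (log_pos (by linarith))]
  exact log_le_log two_pos (by linarith)

theorem log_two_div_log_add_one_anti {m n : ℕ} (hm : 1 ≤ m) (hmn : m ≤ n) :
    log 2 / log ((n : ℝ) + 1) ≤ log 2 / log ((m : ℝ) + 1) := by
  have hm' : (1 : ℝ) ≤ m := by exact_mod_cast hm
  have hmn' : (m : ℝ) ≤ n := by exact_mod_cast hmn
  exact div_le_div_of_nonneg_left (log_pos one_lt_two).le (log_pos (by linarith))
    (log_le_log (by linarith) (by linarith))

def IsBlockwiseLogPow (p β : ℝ) (ζ : ℝ → ℝ) : Prop :=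
  ∀ n : ℕ, 1 ≤ n → ∀ x : ℝ, ((n : ℝ) + 1) ^ (-p) ≤ x → x < (n : ℝ) ^ (-p) →
    ζ x = 1 + (log 2 / log ((n : ℝ) + 1)) * x ^ β

namespace IsBlockwiseLogPow

variable {p β : ℝ} {ζ : ℝ → ℝ}

theorem mapsTo_Ioo (h : IsBlockwiseLogPow p β ζ) (hp : 0 < p) (hβ : 0 < β) :
    MapsTo ζ (Ioo 0 1) (Ioo 1 2) := by
  rintro x ⟨hx0, hx1⟩
  obtain ⟨n, hn, hxl, hxu⟩ := exists_add_one_rpow_neg_le_and_lt_rpow_neg hp hx0 hx1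
  have hc := log_two_div_log_add_one_pos hn
  have hc1 := log_two_div_log_add_one_le_one hn
  have hpow : 0 < x ^ β := rpow_pos_of_pos hx0 β
  have hpow1 : x ^ β < 1 := rpow_lt_one hx0.le hx1 hβ
  rw [h n hn x hxl hxu]
  constructor <;> nlinarith

theorem strictMonoOn_Ioo (h : IsBlockwiseLogPow p β ζ) (hp : 0 < p) (hβ : 0 < β) :
    StrictMonoOn ζ (Ioo 0 1) := by
  rintro x ⟨hx0, hx1⟩ y ⟨hy0, hy1⟩ hxy
  obtain ⟨n, hn, hxl, hxu⟩ := exists_add_one_rpow_neg_le_and_lt_rpow_neg hp hx0 hx1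
  obtain ⟨m, hm, hyl, hyu⟩ := exists_add_one_rpow_neg_le_and_lt_rpow_neg hp hy0 hy1
  have hmn := le_of_add_one_rpow_neg_le_of_lt_rpow_neg hp.le hxl hyu hxy
  rw [h n hn x hxl hxu, h m hm y hyl hyu]
  have hpow : x ^ β < y ^ β := rpow_lt_rpow hx0.le hxy hβ
  calc 1 + (log 2 / log ((n : ℝ) + 1)) * x ^ β
      < 1 + (log 2 / log ((n : ℝ) + 1)) * y ^ β := by
        gcongr; exact log_two_div_log_add_one_pos hn
    _ ≤ 1 + (log 2 / log ((m : ℝ) + 1)) * y ^ β := by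
        gcongr 1 + ?_ * _; exact log_two_div_log_add_one_anti hm hmn

end IsBlockwiseLogPow

theorem zeta_strictMono_and_bounds_general (betaHat κ : ℝ)
    (hbh : 0 < betaHat) (hκ1 : κ < 1)
    (ζ : ℝ → ℝ)
    (h_neg : ∀ x : ℝ, x ≤ 0 → ζ x = (x - 1) / (2 * x - 1))
    (h_mid : ∀ n : ℕ, 1 ≤ n → ∀ x : ℝ,
      ((n : ℝ) + 1) ^ (-(1 / (1 - κ))) ≤ x → x < (n : ℝ) ^ (-(1 / (1 - κ))) →
      ζ x = 1 + (Real.log 2 / Real.log ((n : ℝ) + 1)) * x ^ betaHat)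
    (h_pos : ∀ x : ℝ, 1 ≤ x → ζ x = (3 * x + 1) / (x + 1)) :
    StrictMono ζ ∧ ∀ x : ℝ, 1 / 2 < ζ x ∧ ζ x < 3 := by
  have hp : 0 < 1 / (1 - κ) := one_div_pos.2 (sub_pos.2 hκ1)
  have h_mid' : IsBlockwiseLogPow (1 / (1 - κ)) betaHat ζ := h_mid
  have hEq_neg : EqOn (fun x => (x - 1) / (2 * x - 1)) ζ (Iic 0) := fun x hx => (h_neg x hx).symm
  have hEq_pos : EqOn (fun x => (3 * x + 1) / (x + 1)) ζ (Ici 1) := fun x hx => (h_pos x hx).symm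
  have hs₁ : MapsTo ζ (Iic 0) (Ioc (1 / 2) 1) := mapsTo_sub_one_div_two_mul_sub_one.congr hEq_neg
  have hs₂ : MapsTo ζ (Ioo 0 1) (Ioo 1 2) := h_mid'.mapsTo_Ioo hp hbh
  have hs₃ : MapsTo ζ (Ici 1) (Ico 2 3) := mapsTo_three_mul_add_one_div_add_one.congr hEq_pos
  have hm₁ : StrictMonoOn ζ (Iic 0) :=
    (strictMonoOn_sub_one_div_two_mul_sub_one.mono (Iic_subset_Iio.2 (by norm_num))).congr hEq_neg
  have hm₃ : StrictMonoOn ζ (Ici 1) :=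
    (strictMonoOn_three_mul_add_one_div_add_one.mono (Ici_subset_Ioi.2 (by norm_num))).congr hEq_pos
  refine ⟨?_, fun x => ?_⟩
  · rw [← strictMonoOn_univ, ← Iic_union_Ioi (a := (0 : ℝ)), ← Ioo_union_Ici_eq_Ioi one_pos]
    refine hm₁.union_of_forall_lt ((h_mid'.strictMonoOn_Ioo hp hbh).union_of_forall_lt hm₃
      (fun a ha b hb => ha.2.trans_le hb) fun a ha b hb => (hs₂ ha).2.trans_le (hs₃ hb).1) ?_ ?_
    · rintro a (ha : a ≤ 0) b (⟨hb, -⟩ | (hb : 1 ≤ b)) <;> linarith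
    · rintro a ha b (hb | hb)
      · exact (hs₁ ha).2.trans_lt (hs₂ hb).1
      · linarith [(hs₁ ha).2, (hs₃ hb).1]
  · rcases le_or_gt x 0 with hx0 | hx0
    · have := hs₁ (mem_Iic.2 hx0); constructor <;> linarith [this.1, this.2]
    rcases lt_or_ge x 1 with hx1 | hx1
    · have := hs₂ ⟨hx0, hx1⟩; constructor <;> linarith [this.1, this.2]
    · have := hs₃ (mem_Ici.2 hx1); constructor <;> linarith [this.1, this.2]

/-- The function `ζ` defined piecewise by `(x-1)/(2x-1)` for `x ≤ 0`, by
`1 + (log 2 / log (n+1)) x^β̂` on `[(n+1)^{-1/(1-κ)}, n^{-1/(1-κ)})` for `n ∈ ℕ`, `n ≥ 1`,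
and by `(3x+1)/(x+1)` for `x ≥ 1`, is strictly increasing and satisfies `1/2 < ζ < 3`. -/
theorem zeta_strictMono_and_bounds (betaHat κ : ℝ)
    (hbh : 0 < betaHat) (hbh1 : betaHat < 1) (hκ : 0 < κ) (hκ1 : κ < 1)
    (ζ : ℝ → ℝ)
    (h_neg : ∀ x : ℝ, x ≤ 0 → ζ x = (x - 1) / (2 * x - 1))
    (h_mid : ∀ n : ℕ, 1 ≤ n → ∀ x : ℝ,
      ((n : ℝ) + 1) ^ (-(1 / (1 - κ))) ≤ x → x < (n : ℝ) ^ (-(1 / (1 - κ))) →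
      ζ x = 1 + (Real.log 2 / Real.log ((n : ℝ) + 1)) * x ^ betaHat)
    (h_pos : ∀ x : ℝ, 1 ≤ x → ζ x = (3 * x + 1) / (x + 1)) :
    StrictMono ζ ∧ ∀ x : ℝ, 1 / 2 < ζ x ∧ ζ x < 3 :=
  zeta_strictMono_and_bounds_general betaHat κ hbh hκ1 ζ h_neg h_mid h_pos
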